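/- Define J̃ : T → T on the space T = {(u,v) ∈ S^6 × ℝ^7 : ⟨u,v⟩=0} of oriented lines by acting on tangent vectors (u̇, v̇) ∈ T_{(u,v)}T via componentwise cross product with u: J̃(u̇, v̇) = (u × u̇, u × v̇). Then J̃² = −Id, so J̃ is an almost complex structure on T. -/

import Mathlib

open scoped RealInnerProductSpace

/-- Structure constants of the standard `G₂` 3-form
`φ = dx₁₂₃ + dx₁∧(dx₄₅+dx₆₇) + dx₂∧(dx₄₆−dx₅₇) − dx₃∧(dx₄₇+dx₅₆)` on `ℝ⁷`
(indices shifted to `0,…,6`), totally antisymmetrised. -/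
def g2phi (i j k : Fin 7) : ℝ :=
  let f : Fin 7 × Fin 7 × Fin 7 → ℝ := fun t =>
    if t ∈ ([(0, 1, 2), (0, 3, 4), (0, 5, 6), (1, 3, 5)] : List (Fin 7 × Fin 7 × Fin 7))
      then 1
    else if t ∈ ([(1, 4, 6), (2, 3, 6), (2, 4, 5)] : List (Fin 7 × Fin 7 × Fin 7))
      then -1
    else 0
  f (i, j, k) + f (j, k, i) + f (k, i, j) - f (i, k, j) - f (j, i, k) - f (k, j, i)

/-- The seven-dimensional cross product on `ℝ⁷`, defined by `⟨X × Y, Z⟩ = φ(X,Y,Z)`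
for the standard `G₂` 3-form `φ` (equivalently, the cross product induced by octonion
multiplication on the imaginary octonions). -/
noncomputable def cross7 (X Y : EuclideanSpace ℝ (Fin 7)) : EuclideanSpace ℝ (Fin 7) :=
  WithLp.toLp 2 fun k => ∑ i, ∑ j, g2phi i j k * X i * Y j

lemma cross7_apply (X Y : EuclideanSpace ℝ (Fin 7)) :
    cross7 X Y = WithLp.toLp 2 ![
      X 1 * Y 2 - X 2 * Y 1 + X 3 * Y 4 - X 4 * Y 3 + X 5 * Y 6 - X 6 * Y 5,
      X 2 * Y 0 - X 0 * Y 2 + X 3 * Y 5 - X 5 * Y 3 + X 6 * Y 4 - X 4 * Y 6,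
      X 0 * Y 1 - X 1 * Y 0 + X 5 * Y 4 - X 4 * Y 5 + X 6 * Y 3 - X 3 * Y 6,
      X 4 * Y 0 - X 0 * Y 4 + X 5 * Y 1 - X 1 * Y 5 + X 2 * Y 6 - X 6 * Y 2,
      X 0 * Y 3 - X 3 * Y 0 + X 1 * Y 6 - X 6 * Y 1 + X 2 * Y 5 - X 5 * Y 2,
      X 6 * Y 0 - X 0 * Y 6 + X 1 * Y 3 - X 3 * Y 1 + X 4 * Y 2 - X 2 * Y 4,
      X 0 * Y 5 - X 5 * Y 0 + X 3 * Y 2 - X 2 * Y 3 + X 4 * Y 1 - X 1 * Y 4] := by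
  ext k
  fin_cases k <;>
    simp +decide only [cross7, g2phi, Fin.sum_univ_seven, ↓reduceIte, Fin.zero_eta, Fin.mk_one,
      Fin.reduceFinMk, Matrix.cons_val, Matrix.cons_val_zero, Matrix.cons_val_one] <;>
    ring

theorem cross7_cross7_self (u x : EuclideanSpace ℝ (Fin 7)) :
    cross7 u (cross7 u x) = ⟪u, x⟫ • u - ‖u‖ ^ 2 • x := by
  ext k
  fin_cases k <;>
    simp only [cross7_apply, Matrix.cons_val, Matrix.cons_val_one, Matrix.cons_val_zero,
      Fin.zero_eta, Fin.mk_one, Fin.reduceFinMk, PiLp.inner_apply, RCLike.inner_apply,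
      Real.ringHom_apply, Fin.sum_univ_seven, EuclideanSpace.real_norm_sq_eq, PiLp.sub_apply,
      PiLp.smul_apply, smul_eq_mul] <;>
    ring

theorem stmt15_general (u a b : EuclideanSpace ℝ (Fin 7)) (hu : ‖u‖ = 1)
    (ha : ⟪u, a⟫ = 0) (hb : ⟪u, b⟫ = 0) :
    (cross7 u (cross7 u a), cross7 u (cross7 u b)) = (-a, -b) := by
  simp [cross7_cross7_self, ha, hb, hu]

/-- On the twistor space `T = {(u,v) ∈ S⁶ × ℝ⁷ : ⟨u,v⟩ = 0}`, the map acting on tangent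
vectors `(a, b)` (with `a ⟂ u`, `b ⟂ u`, the normal Jacobi field description) by componentwise
cross product with `u` squares to `−Id`, hence is an almost complex structure on `T`. -/
theorem stmt15 (u v a b : EuclideanSpace ℝ (Fin 7)) (hu : ‖u‖ = 1) (huv : ⟪u, v⟫ = 0)
    (ha : ⟪u, a⟫ = 0) (hb : ⟪u, b⟫ = 0) :
    (cross7 u (cross7 u a), cross7 u (cross7 u b)) = (-a, -b) :=
  stmt15_general u a b hu ha hb
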